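/- (Posterior tree distribution is Galton–Watson.) Let L ≥ 1, a > 0, and x₁,…,xₙ ∈ [0,1). For a binary string ε with |ε| < L set ν_ε = 2^{N(I_ε)} * B(a + N(I_{ε0}), a + N(I_{ε1})) / B(a,a), where for I ⊆ [0,1), N(I) = #{i : xᵢ ∈ I}. Let p assign to every binary string ε of length |ε| ≤ L a number p_ε ∈ [0,1) with p_ε = 0 whenever |ε| = L, and let q be the unique function with values in [0,1), q_ε = 0 for |ε| = L, satisfying (q_ε/(1 − q_ε))(1 − q_{ε0})(1 − q_{ε1}) = (p_ε/(1 − p_ε))(1 − p_{ε0})(1 − p_{ε1}) ν_ε for all |ε| < L. Then there exists a constant c > 0, independent of the tree, such that for every full binary tree T with d(T) ≤ L (identifying nodes (l,k) with the binary strings ε(k,l)): ( Π_{ε ∈ T_int} p_ε ν_ε ) * ( Π_{ε ∈ T_ext} (1 − p_ε) ) = c * ( Π_{ε ∈ T_int} q_ε ) * ( Π_{ε ∈ T_ext} (1 − q_ε) ). -/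

import Mathlib

/-!
Put `r_ε = p_ε ν_ε (1 - p_{ε0}) (1 - p_{ε1}) / (1 - p_ε)`. Every node of a full binary
tree other than the root is a child of exactly one internal node, so the factors `1 - p`
telescope: `(Π_{T_int} p_ε ν_ε) (Π_{T_ext} (1 - p_ε)) = (1 - p_∅) Π_{T_int} r_ε`.
The same computation for `q` produces, by the recursion defining `q`, the same node
factors `r_ε`, whence `c = (1 - p_∅) / (1 - q_∅)`.
-/

open scoped Classical

/-- The dyadic interval `I_{l,k} = [k 2^{-l}, (k+1) 2^{-l})`. -/
def dyadicI (l k : ℕ) : Set ℝ := Set.Ico ((k : ℝ) / 2 ^ l) (((k : ℝ) + 1) / 2 ^ l)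

/-- A full binary tree (as a finite set of nodes): nodes `(l,k)` satisfy `k < 2^l`, and any
node of positive depth has its parent `(l-1, ⌊k/2⌋)` and its sibling `(l, k + (-1)^k)`
in the tree. -/
def IsFullBinaryTree (T : Finset (ℕ × ℕ)) : Prop :=
  (∀ p ∈ T, p.2 < 2 ^ p.1) ∧
  ∀ p ∈ T, 0 < p.1 →
    (p.1 - 1, p.2 / 2) ∈ T ∧ (p.1, if p.2 % 2 = 0 then p.2 + 1 else p.2 - 1) ∈ T

/-- The internal nodes of `T`. -/
def treeInt (T : Finset (ℕ × ℕ)) : Finset (ℕ × ℕ) :=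
  T.filter fun p => (p.1 + 1, 2 * p.2) ∈ T

/-- The external nodes (leaves) of `T`. -/
def treeExt (T : Finset (ℕ × ℕ)) : Finset (ℕ × ℕ) :=
  T.filter fun p => (p.1 + 1, 2 * p.2) ∉ T

/-- `N(I) = #{i : xᵢ ∈ I}`. -/
noncomputable def cnt {n : ℕ} (x : Fin n → ℝ) (I : Set ℝ) : ℕ :=
  (Finset.univ.filter fun i => x i ∈ I).card

/-- The Beta function `B(x,y) = Γ(x)Γ(y)/Γ(x+y)`. -/
noncomputable def betaFn (x y : ℝ) : ℝ := Real.Gamma x * Real.Gamma y / Real.Gamma (x + y)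

/-- `ν_ε = 2^{N(I_ε)} B(a + N(I_{ε0}), a + N(I_{ε1})) / B(a,a)`, identifying binary strings
`ε` with pairs `(l,k)`. -/
noncomputable def nuX (a : ℝ) {n : ℕ} (x : Fin n → ℝ) (l k : ℕ) : ℝ :=
  2 ^ cnt x (dyadicI l k) *
    betaFn (a + cnt x (dyadicI (l + 1) (2 * k))) (a + cnt x (dyadicI (l + 1) (2 * k + 1))) /
      betaFn a a

namespace IsFullBinaryTree

variable {T : Finset (ℕ × ℕ)}

theorem root_mem (hT : IsFullBinaryTree T) (hne : T.Nonempty) : ((0 : ℕ), (0 : ℕ)) ∈ T := by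
  obtain ⟨⟨l, k⟩, hlk⟩ := hne
  induction l generalizing k with
  | zero =>
    obtain rfl : k = 0 := by simpa using hT.1 _ hlk
    exact hlk
  | succ l ih => exact ih (k / 2) (hT.2 _ hlk l.succ_pos).1

theorem right_child_mem (hT : IsFullBinaryTree T) {r : ℕ × ℕ} (hr : r ∈ treeInt T) :
    (r.1 + 1, 2 * r.2 + 1) ∈ T := by
  have hleft := (Finset.mem_filter.mp hr).2
  simpa using (hT.2 _ hleft r.1.succ_pos).2

theorem parent_mem_treeInt (hT : IsFullBinaryTree T) {l k : ℕ} (h : (l + 1, k) ∈ T) :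
    (l, k / 2) ∈ treeInt T := by
  obtain ⟨hparent, hsibling⟩ := hT.2 _ h l.succ_pos
  refine Finset.mem_filter.mpr ⟨by simpa using hparent, ?_⟩
  rcases Nat.mod_two_eq_zero_or_one k with hk | hk
  · rwa [Nat.mul_div_cancel' (Nat.dvd_of_mod_eq_zero hk)]
  · simp only [hk, if_neg one_ne_zero] at hsibling
    rwa [show 2 * (k / 2) = k - 1 by omega]

theorem prod_erase_root_eq_prod_children {M : Type*} [CommMonoid M] (hT : IsFullBinaryTree T)
    (g : ℕ → ℕ → M) :
    ∏ r ∈ T.erase (0, 0), g r.1 r.2 =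
      ∏ r ∈ treeInt T, g (r.1 + 1) (2 * r.2) * g (r.1 + 1) (2 * r.2 + 1) := by
  have hpos : ∀ r ∈ T.erase (0, 0), r.1 ≠ 0 := by
    rintro ⟨l, k⟩ hr rfl
    obtain ⟨hroot, hr⟩ := Finset.mem_erase.mp hr
    obtain rfl : k = 0 := by simpa using hT.1 _ hr
    exact hroot rfl
  symm
  calc ∏ r ∈ treeInt T, g (r.1 + 1) (2 * r.2) * g (r.1 + 1) (2 * r.2 + 1)
      = ∏ rb ∈ treeInt T ×ˢ Finset.range 2, g (rb.1.1 + 1) (2 * rb.1.2 + rb.2) := by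
        simp [Finset.prod_product, Finset.prod_range_succ]
    _ = ∏ r ∈ T.erase (0, 0), g r.1 r.2 := by
      refine Finset.prod_nbij' (fun rb => (rb.1.1 + 1, 2 * rb.1.2 + rb.2))
        (fun r => ((r.1 - 1, r.2 / 2), r.2 % 2)) ?_ ?_ ?_ ?_ fun _ _ => rfl
      · rintro ⟨r, b⟩ hrb
        obtain ⟨hr, hb⟩ := Finset.mem_product.mp hrb
        rw [Finset.mem_range] at hb
        refine Finset.mem_erase.mpr ⟨by simp, ?_⟩
        interval_cases b
        · exact (Finset.mem_filter.mp hr).2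
        · exact hT.right_child_mem hr
      · rintro ⟨l, k⟩ hr
        obtain ⟨l, rfl⟩ := Nat.exists_eq_succ_of_ne_zero (hpos _ hr)
        exact Finset.mem_product.mpr ⟨hT.parent_mem_treeInt (Finset.mem_of_mem_erase hr),
          Finset.mem_range.mpr (Nat.mod_lt _ two_pos)⟩
      · rintro ⟨⟨l, k⟩, b⟩ hrb
        have hb := (Finset.mem_product.mp hrb).2
        simp only [Finset.mem_range] at hb
        simp only [Prod.mk.injEq]
        omega
      · rintro ⟨l, k⟩ hr
        have := hpos _ hr
        simp only [Prod.mk.injEq]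
        omega

theorem prod_treeInt_mul_prod_treeExt {G : Type*} [CommGroupWithZero G]
    (hT : IsFullBinaryTree T) (hne : T.Nonempty) (f g : ℕ → ℕ → G)
    (hg : ∀ r ∈ treeInt T, g r.1 r.2 ≠ 0) :
    (∏ r ∈ treeInt T, f r.1 r.2) * ∏ r ∈ treeExt T, g r.1 r.2 =
      g 0 0 * ∏ r ∈ treeInt T,
        f r.1 r.2 / g r.1 r.2 * g (r.1 + 1) (2 * r.2) * g (r.1 + 1) (2 * r.2 + 1) := by
  have hsplit :
      ∏ r ∈ T, g r.1 r.2 = (∏ r ∈ treeInt T, g r.1 r.2) * ∏ r ∈ treeExt T, g r.1 r.2 :=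
    (Finset.prod_filter_mul_prod_filter_not T _ _).symm
  rw [← Finset.mul_prod_erase T _ (hT.root_mem hne)] at hsplit
  simp only [mul_assoc, Finset.prod_mul_distrib, Finset.prod_div_distrib,
    ← hT.prod_erase_root_eq_prod_children]
  have hint : ∏ r ∈ treeInt T, g r.1 r.2 ≠ 0 := Finset.prod_ne_zero_iff.mpr hg
  rw [div_mul_eq_mul_div, mul_div_assoc', mul_left_comm, hsplit, mul_left_comm,
    mul_div_cancel_left₀ _ hint]

end IsFullBinaryTree

theorem stmt_18_general (L : ℕ) (a : ℝ)
    (n : ℕ) (x : Fin n → ℝ)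
    (p q : ℕ → ℕ → ℝ)
    (hp : ∀ l ≤ L, ∀ k < 2 ^ l, p l k ∈ Set.Ico (0 : ℝ) 1)
    (hq : ∀ l ≤ L, ∀ k < 2 ^ l, q l k ∈ Set.Ico (0 : ℝ) 1)
    (hrec : ∀ l < L, ∀ k < 2 ^ l,
      q l k / (1 - q l k) * (1 - q (l + 1) (2 * k)) * (1 - q (l + 1) (2 * k + 1)) =
        p l k / (1 - p l k) * (1 - p (l + 1) (2 * k)) * (1 - p (l + 1) (2 * k + 1)) *
          nuX a x l k) :
    ∃ c > 0, ∀ T : Finset (ℕ × ℕ), IsFullBinaryTree T → T.Nonempty →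
      (∀ r ∈ T, r.1 ≤ L) →
      (∏ r ∈ treeInt T, p r.1 r.2 * nuX a x r.1 r.2) *
          (∏ r ∈ treeExt T, (1 - p r.1 r.2)) =
        c * (∏ r ∈ treeInt T, q r.1 r.2) * (∏ r ∈ treeExt T, (1 - q r.1 r.2)) := by
  have one_sub_pos {u : ℕ → ℕ → ℝ}
      (hu : ∀ l ≤ L, ∀ k < 2 ^ l, u l k ∈ Set.Ico (0 : ℝ) 1)
      {l k : ℕ} (hl : l ≤ L) (hk : k < 2 ^ l) : 0 < 1 - u l k :=
    sub_pos.mpr (hu l hl k hk).2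
  refine ⟨(1 - p 0 0) / (1 - q 0 0),
    div_pos (one_sub_pos hp L.zero_le one_pos) (one_sub_pos hq L.zero_le one_pos), ?_⟩
  intro T hT hne hdepth
  have hinternal : ∀ r ∈ treeInt T, r.1 < L ∧ r.2 < 2 ^ r.1 := fun r hr =>
    ⟨hdepth _ (Finset.mem_filter.mp hr).2, hT.1 r (Finset.mem_filter.mp hr).1⟩
  have hP := hT.prod_treeInt_mul_prod_treeExt hne (fun l k => p l k * nuX a x l k)
    (fun l k => 1 - p l k) fun r hr =>
      (one_sub_pos hp (hinternal r hr).1.le (hinternal r hr).2).ne'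
  have hQ := hT.prod_treeInt_mul_prod_treeExt hne q (fun l k => 1 - q l k) fun r hr =>
    (one_sub_pos hq (hinternal r hr).1.le (hinternal r hr).2).ne'
  beta_reduce at hP hQ
  rw [mul_assoc, hP, hQ, ← mul_assoc,
    div_mul_cancel₀ _ (one_sub_pos hq L.zero_le one_pos).ne']
  congr 1
  refine Finset.prod_congr rfl fun r hr => ?_
  rw [hrec r.1 (hinternal r hr).1 r.2 (hinternal r hr).2]
  ring

/-- (Posterior tree distribution is Galton–Watson.) Let `L ≥ 1`, `a > 0`,
`x₁, …, xₙ ∈ [0,1)`, and set `ν_ε = 2^{N(I_ε)} B(a+N(I_{ε0}), a+N(I_{ε1}))/B(a,a)`. Let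
`p_ε ∈ [0,1)` for `|ε| ≤ L` with `p_ε = 0` when `|ε| = L`, and let `q` have values in `[0,1)`,
`q_ε = 0` when `|ε| = L`, and satisfy
`(q_ε/(1-q_ε))(1-q_{ε0})(1-q_{ε1}) = (p_ε/(1-p_ε))(1-p_{ε0})(1-p_{ε1}) ν_ε` for `|ε| < L`.
Then there is a constant `c > 0`, independent of the tree, such that for every full binary
tree `T` with `d(T) ≤ L`:
`(Π_{ε ∈ T_int} p_ε ν_ε)(Π_{ε ∈ T_ext} (1-p_ε)) = c (Π_{ε ∈ T_int} q_ε)(Π_{ε ∈ T_ext} (1-q_ε))`. -/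
theorem stmt_18 (L : ℕ) (hL : 1 ≤ L) (a : ℝ) (ha : 0 < a)
    (n : ℕ) (x : Fin n → ℝ) (hx : ∀ i, x i ∈ Set.Ico (0 : ℝ) 1)
    (p q : ℕ → ℕ → ℝ)
    (hp : ∀ l ≤ L, ∀ k < 2 ^ l, p l k ∈ Set.Ico (0 : ℝ) 1)
    (hpL : ∀ k < 2 ^ L, p L k = 0)
    (hq : ∀ l ≤ L, ∀ k < 2 ^ l, q l k ∈ Set.Ico (0 : ℝ) 1)
    (hqL : ∀ k < 2 ^ L, q L k = 0)
    (hrec : ∀ l < L, ∀ k < 2 ^ l,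
      q l k / (1 - q l k) * (1 - q (l + 1) (2 * k)) * (1 - q (l + 1) (2 * k + 1)) =
        p l k / (1 - p l k) * (1 - p (l + 1) (2 * k)) * (1 - p (l + 1) (2 * k + 1)) *
          nuX a x l k) :
    ∃ c > 0, ∀ T : Finset (ℕ × ℕ), IsFullBinaryTree T → T.Nonempty →
      (∀ r ∈ T, r.1 ≤ L) →
      (∏ r ∈ treeInt T, p r.1 r.2 * nuX a x r.1 r.2) *
          (∏ r ∈ treeExt T, (1 - p r.1 r.2)) =
        c * (∏ r ∈ treeInt T, q r.1 r.2) * (∏ r ∈ treeExt T, (1 - q r.1 r.2)) :=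
  stmt_18_general L a n x p q hp hq hrec
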